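/- arXiv:1610.06201 — 3 statements merged into one kernel-verified Lean document; each statement's English description precedes it below -/
import Mathlib

section
/- There exists a real number ε > 0 such that for every x ∈ X and every vector u ∈ E satisfying (1/2)·‖u‖² + V x = k, one has ‖u‖² + ⟪u, θ x⟫ ≥ ε². (In particular the evaluation of the 1-form λ + τ*θ on the Hamiltonian vector field is uniformly bounded below by ε² along the energy level {H = k}.) -/
/-! The identity `‖u‖² + ⟪u, w⟫ = (‖u‖² - ‖w‖² + ‖u + w‖²) / 2` bounds the left side below by
half the gap `‖u‖² - ‖w‖²`. On the energy level `‖u‖² = 2 (k - V x)`, and the uniform gap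
hypothesis makes this half-gap at least `δ`, so `ε = √δ` works. -/

theorem half_norm_sq_sub_norm_sq_le_norm_sq_add_inner {E : Type*} [NormedAddCommGroup E]
    [InnerProductSpace ℝ E] (u w : E) :
    (‖u‖ ^ 2 - ‖w‖ ^ 2) / 2 ≤ ‖u‖ ^ 2 + inner ℝ u w := by
  have hexpand : ‖u + w‖ ^ 2 = ‖u‖ ^ 2 + 2 * inner ℝ u w + ‖w‖ ^ 2 := norm_add_sq_real u w
  linarith [sq_nonneg ‖u + w‖]

theorem stmt_1_general
    {E : Type*} [NormedAddCommGroup E] [InnerProductSpace ℝ E]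
    {X : Type*}
    (V : X → ℝ)
    (θ : X → E) (k δ : ℝ) (hδ : 0 < δ)
    (hgap : ∀ x : X, (1 / 2) * ‖θ x‖ ^ 2 + V x ≤ k - δ) :
    ∃ ε : ℝ, 0 < ε ∧ ∀ x : X, ∀ u : E,
      (1 / 2) * ‖u‖ ^ 2 + V x = k →
      ‖u‖ ^ 2 + inner ℝ u (θ x) ≥ ε ^ 2 := by
  refine ⟨√δ, Real.sqrt_pos.mpr hδ, fun x u hu => ?_⟩
  calc √δ ^ 2 = δ := Real.sq_sqrt hδ.le
    _ ≤ (‖u‖ ^ 2 - ‖θ x‖ ^ 2) / 2 := by linarith [hgap x]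
    _ ≤ ‖u‖ ^ 2 + inner ℝ u (θ x) := half_norm_sq_sub_norm_sq_le_norm_sq_add_inner u (θ x)

/-- The core estimate in the proof of Proposition 2.3: under the uniform gap
hypothesis, the evaluation `‖u‖² + ⟪u, θ x⟫` (the contact form applied to the
Hamiltonian vector field) is uniformly bounded below by `ε²` along the energy
level `{(1/2)‖u‖² + V x = k}`. -/
theorem stmt_1
    {E : Type*} [NormedAddCommGroup E] [InnerProductSpace ℝ E]
    {X : Type*} [Nonempty X]
    (V : X → ℝ) (hV : BddBelow (Set.range V))
    (θ : X → E) (k δ : ℝ) (hδ : 0 < δ)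
    (hgap : ∀ x : X, (1 / 2) * ‖θ x‖ ^ 2 + V x ≤ k - δ) :
    ∃ ε : ℝ, 0 < ε ∧ ∀ x : X, ∀ u : E,
      (1 / 2) * ‖u‖ ^ 2 + V x = k →
      ‖u‖ ^ 2 + inner ℝ u (θ x) ≥ ε ^ 2 :=
  stmt_1_general V θ k δ hδ hgap
end

section
/- For every x ∈ U, the function f is differentiable at x and its Fréchet derivative at x equals θ x; that is, f is a primitive of the closed 1-form θ on U. -/
/-!
Differentiating under the integral sign, `f` has derivative
`∫₀¹ (θ (t • x) + t • D θ (t • x) (·) x) dt` at `x`; the integrand is locally uniformly bounded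
because it is continuous on a neighbourhood of the compact segment `[0, 1] × {x}`. Closedness
turns `D θ (t • x) (·) x` into `D θ (t • x) x`, so the integrand becomes the `t`-derivative of
`t • θ (t • x)`, whose integral over `[0, 1]` is `θ x`.
-/

open Filter Topology Set intervalIntegral

theorem ContinuousOn.exists_eventually_forall_norm_le {X Y F : Type*} [TopologicalSpace X]
    [TopologicalSpace Y] [SeminormedAddCommGroup F] {g : X → Y → F} {S : Set (X × Y)}
    (hS : IsOpen S) (hg : ContinuousOn (Function.uncurry g) S) {K : Set Y} (hK : IsCompact K)
    {x : X} (hxK : ∀ y ∈ K, (x, y) ∈ S) :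
    ∃ C, ∀ᶠ x' in 𝓝 x, ∀ y ∈ K, (x', y) ∈ S ∧ ‖g x' y‖ ≤ C := by
  obtain ⟨C, hC⟩ := hK.exists_bound_of_continuousOn
    (hg.comp (Continuous.prodMk_right x).continuousOn hxK)
  refine ⟨C + 1, hK.eventually_forall_of_forall_eventually fun y hy => ?_⟩
  have hg_at : ContinuousAt (Function.uncurry g) (x, y) := hg.continuousAt (hS.mem_nhds (hxK y hy))
  filter_upwards [hS.mem_nhds (hxK y hy),
    hg_at.norm.eventually_lt_const ((hC y hy).trans_lt (lt_add_one C))] with p hpS hpC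
  exact ⟨hpS, hpC.le⟩

section Radial

variable {E : Type*} [NormedAddCommGroup E] [NormedSpace ℝ E] {θ : E → E →L[ℝ] ℝ}

noncomputable def radialDeriv (θ : E → E →L[ℝ] ℝ) (y : E) (t : ℝ) : E →L[ℝ] ℝ :=
  θ (t • y) + t • (fderiv ℝ θ (t • y)).flip y

theorem hasFDerivAt_radialIntegrand {y : E} {t : ℝ} (hθ : DifferentiableAt ℝ θ (t • y)) :
    HasFDerivAt (fun z => θ (t • z) z) (radialDeriv θ y t) y := by
  have hcomp : HasFDerivAt (fun z : E => θ (t • z))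
      ((fderiv ℝ θ (t • y)).comp (t • ContinuousLinearMap.id ℝ E)) y :=
    hθ.hasFDerivAt.comp y ((hasFDerivAt_id y).const_smul t)
  have happly : HasFDerivAt (fun z => θ (t • z) z) (_ : E →L[ℝ] ℝ) y :=
    hcomp.clm_apply (hasFDerivAt_id y)
  convert happly using 1
  ext v
  simp [radialDeriv]

theorem hasDerivAt_smul_apply_smul {x : E} {t : ℝ} (hθ : DifferentiableAt ℝ θ (t • x))
    (hsymm : ∀ u v : E, fderiv ℝ θ (t • x) u v = fderiv ℝ θ (t • x) v u) :
    HasDerivAt (fun s : ℝ => s • θ (s • x)) (radialDeriv θ x t) t := by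
  have hray : HasDerivAt (fun s : ℝ => s • x) x t := by
    simpa using (hasDerivAt_id t).smul_const x
  have hprod : HasDerivAt (fun s : ℝ => s • θ (s • x)) _ t :=
    (hasDerivAt_id t).smul (hθ.hasFDerivAt.comp_hasDerivAt t hray)
  convert hprod using 1
  ext v
  simp [radialDeriv, hsymm _ x]
  ring

theorem continuousOn_uncurry_radialDeriv {U : Set E} (hθ : ContinuousOn θ U)
    (hθ' : ContinuousOn (fderiv ℝ θ) U) :
    ContinuousOn (Function.uncurry (radialDeriv θ)) {p : E × ℝ | p.2 • p.1 ∈ U} := by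
  have hsmul : ContinuousOn (fun p : E × ℝ => p.2 • p.1) {p : E × ℝ | p.2 • p.1 ∈ U} := by
    fun_prop
  have hflip : ContinuousOn (fun p : E × ℝ => (fderiv ℝ θ (p.2 • p.1)).flip)
      {p : E × ℝ | p.2 • p.1 ∈ U} :=
    (ContinuousLinearMap.flipₗᵢ ℝ E E ℝ).continuous.comp_continuousOn
      (hθ'.comp hsmul fun _ hp => hp)
  exact (hθ.comp hsmul fun _ hp => hp).add
    (continuousOn_snd.smul (hflip.clm_apply continuousOn_fst))

theorem continuousOn_radialDeriv {U : Set E} (hθ : ContinuousOn θ U)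
    (hθ' : ContinuousOn (fderiv ℝ θ) U) {y : E} (hy : ∀ t ∈ Icc (0 : ℝ) 1, t • y ∈ U) :
    ContinuousOn (radialDeriv θ y) (Icc 0 1) :=
  (continuousOn_uncurry_radialDeriv hθ hθ').comp (Continuous.prodMk_right y).continuousOn hy

theorem integral_radialDeriv {U : Set E} (hU : IsOpen U) (hθ : ContDiffOn ℝ 1 θ U) {x : E}
    (hx : ∀ t ∈ Icc (0 : ℝ) 1, t • x ∈ U)
    (hsymm : ∀ t ∈ Icc (0 : ℝ) 1, ∀ u v : E,
      fderiv ℝ θ (t • x) u v = fderiv ℝ θ (t • x) v u) :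
    ∫ t in (0 : ℝ)..1, radialDeriv θ x t = θ x := by
  have hderiv : ∀ t ∈ uIcc (0 : ℝ) 1,
      HasDerivAt (fun s : ℝ => s • θ (s • x)) (radialDeriv θ x t) t := by
    intro t ht
    rw [uIcc_of_le zero_le_one] at ht
    exact hasDerivAt_smul_apply_smul (hθ.differentiableOn one_ne_zero |>.differentiableAt
      (hU.mem_nhds (hx t ht))) (hsymm t ht)
  have hint : IntervalIntegrable (radialDeriv θ x) MeasureTheory.volume 0 1 :=
    (continuousOn_radialDeriv hθ.continuousOn (hθ.continuousOn_fderiv_of_isOpen hU le_rfl)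
      hx).intervalIntegrable_of_Icc zero_le_one
  simp [integral_eq_sub_of_hasDerivAt hderiv hint]

theorem hasFDerivAt_integral_radial {U : Set E} (hU : IsOpen U) (hθ : ContDiffOn ℝ 1 θ U)
    {x : E} (hx : ∀ t ∈ Icc (0 : ℝ) 1, t • x ∈ U) :
    HasFDerivAt (fun y => ∫ t in (0 : ℝ)..1, θ (t • y) y)
      (∫ t in (0 : ℝ)..1, radialDeriv θ x t) x := by
  have hθc := hθ.continuousOn
  have hθ'c := hθ.continuousOn_fderiv_of_isOpen hU le_rfl
  obtain ⟨C, hC⟩ := (continuousOn_uncurry_radialDeriv hθc hθ'c).exists_eventually_forall_norm_le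
    (hU.preimage (by fun_prop)) isCompact_Icc hx
  have hIoc : uIoc (0 : ℝ) 1 ⊆ Icc 0 1 := by
    rw [uIoc_of_le zero_le_one]; exact Ioc_subset_Icc_self
  have hcont : ∀ y : E, (∀ t ∈ Icc (0 : ℝ) 1, t • y ∈ U) →
      ContinuousOn (fun t : ℝ => θ (t • y) y) (Icc 0 1) :=
    fun y hy => (hθc.comp (by fun_prop) hy).clm_apply continuousOn_const
  refine hasFDerivAt_integral_of_dominated_of_fderiv_le (bound := fun _ => C) hC ?_
    ((hcont x hx).intervalIntegrable_of_Icc zero_le_one)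
    (((continuousOn_radialDeriv hθc hθ'c hx).mono hIoc).aestronglyMeasurable measurableSet_uIoc)
    (.of_forall fun t ht y hy => (hy t (hIoc ht)).2) intervalIntegrable_const
    (.of_forall fun t ht y hy => hasFDerivAt_radialIntegrand
      ((hθ.differentiableOn one_ne_zero).differentiableAt (hU.mem_nhds (hy t (hIoc ht)).1)))
  filter_upwards [hC] with y hy
  exact ((hcont y fun t ht => (hy t ht).1).mono hIoc).aestronglyMeasurable measurableSet_uIoc

end Radial

/-- The Poincaré lemma on a star-shaped open set (used in the proofs of
Lemma 2.5 and Lemma 2.2): if `θ` is a closed `C¹` 1-form on an open set `U`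
star-shaped with respect to the origin, then the radial formula
`f x = ∫₀¹ θ(t • x)(x) dt` defines a primitive of `θ` on `U`, i.e. `f` is
differentiable at every `x ∈ U` with Fréchet derivative `θ x`. -/
theorem stmt_2
    {E : Type*} [NormedAddCommGroup E] [NormedSpace ℝ E]
    (U : Set E) (hU : IsOpen U)
    (hstar : ∀ x ∈ U, ∀ t ∈ Set.Icc (0 : ℝ) 1, t • x ∈ U)
    (θ : E → (E →L[ℝ] ℝ))
    (hθdiff : ContDiffOn ℝ 1 θ U)
    (hθclosed : ∀ x ∈ U, ∀ u v : E, fderiv ℝ θ x u v = fderiv ℝ θ x v u)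
    (f : E → ℝ)
    (hf : ∀ x ∈ U, f x = ∫ t in (0 : ℝ)..1, θ (t • x) x) :
    ∀ x ∈ U, HasFDerivAt f (θ x) x := by
  intro x hx
  have hderiv := hasFDerivAt_integral_radial hU hθdiff (hstar x hx)
  rw [integral_radialDeriv hU hθdiff (hstar x hx)
    fun t ht => hθclosed _ (hstar x hx t ht)] at hderiv
  exact hderiv.congr_of_eventuallyEq (eventually_of_mem (hU.mem_nhds hx) hf)
end

section
/- For every natural number n ≥ 1 there exists a constant K > 0 with the following property: for every C > 0, every open set U ⊆ ℝⁿ containing the closed unit ball, and every closed C¹ 1-form θ : U → (ℝⁿ →L[ℝ] ℝ) satisfying ‖θ y‖ ≤ C for all y in the closed unit ball, there exists a C² function g : ℝⁿ → ℝ whose support is contained in the open unit ball, such that the modified 1-form θ̂ := θ + dg (defined on U, where dg is the Fréchet derivative of g) satisfies θ̂(x) = 0 for every x with ‖x‖ ≤ 1/2, and ‖θ̂(y)‖ ≤ K·C for every y in the closed unit ball. -/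
/-!
A closed 1-form `θ` on a ball is exact: the integral `f x = ∫ θ` along the segment `[0, x]` is a
primitive (Poincaré lemma), and it satisfies `|f x| ≤ C ‖x‖` when `‖θ‖ ≤ C`. For a bump function
`χ` equal to `1` on the ball of radius `1/2` and supported in the closed ball of radius `3/4`, the
function `g = -χ f` does the job: `θ + dg = (1 - χ) θ - f dχ` vanishes where `χ = 1` (there
`dχ = 0`, as `1` is the maximum of `χ`), and is bounded by `(1 + sup ‖dχ‖) C` on the closed unit
ball.
-/

open Metric Set Function

section Cutoff

variable {E : Type*} [NormedAddCommGroup E] [NormedSpace ℝ E]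
  {χ f : E → ℝ} {s : Set E}

theorem contDiff_mul_of_tsupport_subset {n : WithTop ℕ∞} (hs : IsOpen s) (hχs : tsupport χ ⊆ s)
    (hχ : ContDiff ℝ n χ) (hf : ContDiffOn ℝ n f s) : ContDiff ℝ n fun x => χ x * f x := by
  refine contDiff_iff_contDiffAt.2 fun x => ?_
  by_cases hx : x ∈ s
  · exact hχ.contDiffAt.mul (hf.contDiffAt (hs.mem_nhds hx))
  · have hx' : x ∉ tsupport fun x => χ x * f x := fun h => hx (hχs (tsupport_mul_subset_left h))
    exact contDiffAt_const.congr_of_eventuallyEq (notMem_tsupport_iff_eventuallyEq.1 hx')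

theorem hasFDerivAt_mul_of_tsupport_subset {f' : E → E →L[ℝ] ℝ} (hχs : tsupport χ ⊆ s)
    (hχ : Differentiable ℝ χ) (hf : ∀ x ∈ s, HasFDerivAt f (f' x) x) (x : E) :
    HasFDerivAt (fun y => χ y * f y) (χ x • f' x + f x • fderiv ℝ χ x) x := by
  by_cases hx : x ∈ s
  · exact (hχ x).hasFDerivAt.mul (hf x hx)
  · have hxχ : x ∉ tsupport χ := fun h => hx (hχs h)
    have hχx : χ x = 0 := image_eq_zero_of_notMem_tsupport hxχ
    simpa [hχx, fderiv_of_notMem_tsupport ℝ hxχ] using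
      HasFDerivAt.of_notMem_tsupport ℝ fun h => hxχ (tsupport_mul_subset_left (g := f) h)

end Cutoff

section RadialPotential

variable {E : Type*} [NormedAddCommGroup E] [NormedSpace ℝ E] {θ : E → E →L[ℝ] ℝ} {s : Set E}

noncomputable def radialPotential (θ : E → E →L[ℝ] ℝ) (x : E) : ℝ :=
  ∫ᶜ z in Path.segment 0 x, θ z

theorem hasFDerivAt_radialPotential (hs : Convex ℝ s) (hso : IsOpen s) (h0 : (0 : E) ∈ s)
    (hθ : DifferentiableOn ℝ θ s) (hsym : ∀ x ∈ s, ∀ u v, fderiv ℝ θ x u v = fderiv ℝ θ x v u)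
    {x : E} (hx : x ∈ s) : HasFDerivAt (radialPotential θ) (θ x) x :=
  (hs.hasFDerivWithinAt_curveIntegral_segment_of_hasFDerivWithinAt_symmetric (dω := fderiv ℝ θ)
    (fun _ hy => (hθ.differentiableAt (hso.mem_nhds hy)).hasFDerivAt.hasFDerivWithinAt)
    (fun y hy u _ v _ => hsym y hy u v) h0 hx).hasFDerivAt (hso.mem_nhds hx)

theorem contDiffOn_radialPotential {n : ℕ∞} (hn : 1 ≤ n) (hs : Convex ℝ s) (hso : IsOpen s)
    (h0 : (0 : E) ∈ s) (hθ : ContDiffOn ℝ n θ s)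
    (hsym : ∀ x ∈ s, ∀ u v, fderiv ℝ θ x u v = fderiv ℝ θ x v u) :
    ContDiffOn ℝ (n + 1) (radialPotential θ) s := by
  have hθd : DifferentiableOn ℝ θ s := (hθ.of_le (mod_cast hn)).differentiableOn one_ne_zero
  have hf x (hx : x ∈ s) := hasFDerivAt_radialPotential hs hso h0 hθd hsym hx
  refine (contDiffOn_succ_iff_fderiv_of_isOpen hso).2
    ⟨fun x hx => (hf x hx).differentiableAt.differentiableWithinAt, by simp, ?_⟩
  exact hθ.congr fun x hx => (hf x hx).fderiv

theorem norm_radialPotential_le {C : ℝ} {x : E} (hC : ∀ z ∈ segment ℝ 0 x, ‖θ z‖ ≤ C) :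
    ‖radialPotential θ x‖ ≤ C * ‖x‖ := by
  simpa [radialPotential] using norm_curveIntegral_segment_le hC

end RadialPotential

theorem ContDiffBump.fderiv_eq_zero_of_mem_closedBall {E : Type*} [NormedAddCommGroup E]
    [NormedSpace ℝ E] [HasContDiffBump E] {c x : E} (χ : ContDiffBump c)
    (hx : x ∈ closedBall c χ.rIn) : fderiv ℝ χ x = 0 :=
  IsLocalMax.fderiv_eq_zero <| .of_forall fun _ => (χ.one_of_mem_closedBall hx).symm ▸ χ.le_one

section CutoffPotential

variable {E : Type*} [NormedAddCommGroup E] [NormedSpace ℝ E] [HasContDiffBump E]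
  (χ : ContDiffBump (0 : E)) {θ : E → E →L[ℝ] ℝ} {R : ℝ}

noncomputable def cutoffPotential (θ : E → E →L[ℝ] ℝ) (x : E) : ℝ :=
  -(χ x * radialPotential θ x)

theorem tsupport_cutoffPotential_subset : tsupport (cutoffPotential χ θ) ⊆ closedBall 0 χ.rOut :=
  χ.tsupport_eq ▸ (tsupport_neg _).trans_subset tsupport_mul_subset_left

variable {χ}

theorem hasFDerivAt_cutoffPotential (hR : χ.rOut < R) (hθ : DifferentiableOn ℝ θ (ball 0 R))
    (hsym : ∀ x ∈ ball (0 : E) R, ∀ u v, fderiv ℝ θ x u v = fderiv ℝ θ x v u) (y : E) :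
    HasFDerivAt (cutoffPotential χ θ)
      (-(χ y • θ y + radialPotential θ y • fderiv ℝ χ y)) y :=
  (hasFDerivAt_mul_of_tsupport_subset (χ.tsupport_eq ▸ closedBall_subset_ball hR)
    (χ.contDiff.differentiable one_ne_zero)
    (fun _ hx => hasFDerivAt_radialPotential (convex_ball 0 R) isOpen_ball
      (mem_ball_self (χ.rOut_pos.trans hR)) hθ hsym hx) y).neg

theorem contDiff_cutoffPotential (hR : χ.rOut < R) (hθ : ContDiffOn ℝ 1 θ (ball 0 R))
    (hsym : ∀ x ∈ ball (0 : E) R, ∀ u v, fderiv ℝ θ x u v = fderiv ℝ θ x v u) :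
    ContDiff ℝ 2 (cutoffPotential χ θ) :=
  (contDiff_mul_of_tsupport_subset isOpen_ball (χ.tsupport_eq ▸ closedBall_subset_ball hR)
    χ.contDiff (contDiffOn_radialPotential le_rfl (convex_ball 0 R) isOpen_ball
      (mem_ball_self (χ.rOut_pos.trans hR)) hθ hsym)).neg

theorem add_fderiv_cutoffPotential_eq_zero (hR : χ.rOut < R) (hθ : DifferentiableOn ℝ θ (ball 0 R))
    (hsym : ∀ x ∈ ball (0 : E) R, ∀ u v, fderiv ℝ θ x u v = fderiv ℝ θ x v u) {x : E}
    (hx : x ∈ closedBall 0 χ.rIn) : θ x + fderiv ℝ (cutoffPotential χ θ) x = 0 := by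
  rw [(hasFDerivAt_cutoffPotential hR hθ hsym x).fderiv, χ.one_of_mem_closedBall hx,
    χ.fderiv_eq_zero_of_mem_closedBall hx]
  simp

theorem norm_add_fderiv_cutoffPotential_le (hR : χ.rOut < R) (hθ : DifferentiableOn ℝ θ (ball 0 R))
    (hsym : ∀ x ∈ ball (0 : E) R, ∀ u v, fderiv ℝ θ x u v = fderiv ℝ θ x v u) {C M : ℝ}
    (hM : ∀ x, ‖fderiv ℝ χ x‖ ≤ M) (hC : ∀ z ∈ closedBall (0 : E) R, ‖θ z‖ ≤ C) {y : E}
    (hy : y ∈ closedBall 0 R) :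
    ‖θ y + fderiv ℝ (cutoffPotential χ θ) y‖ ≤ (1 + R * M) * C := by
  have hR0 : 0 ≤ R := (χ.rOut_pos.trans hR).le
  have hC0 : 0 ≤ C := (norm_nonneg _).trans (hC 0 (mem_closedBall_self hR0))
  have hf : ‖radialPotential θ y‖ ≤ C * R :=
    (norm_radialPotential_le fun z hz =>
      hC z ((convex_closedBall 0 R).segment_subset (mem_closedBall_self hR0) hy hz)).trans
      (by gcongr; simpa using hy)
  have hχ : ‖1 - χ y‖ ≤ 1 := by
    rw [Real.norm_eq_abs, abs_le]; constructor <;> linarith [χ.nonneg (x := y), χ.le_one (x := y)]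
  rw [(hasFDerivAt_cutoffPotential hR hθ hsym y).fderiv]
  calc ‖θ y + -(χ y • θ y + radialPotential θ y • fderiv ℝ χ y)‖
      = ‖(1 - χ y) • θ y - radialPotential θ y • fderiv ℝ χ y‖ := by congr 1; module
    _ ≤ ‖1 - χ y‖ * ‖θ y‖ + ‖radialPotential θ y‖ * ‖fderiv ℝ χ y‖ := by
      grw [norm_sub_le, norm_smul, norm_smul]
    _ ≤ 1 * C + C * R * M := by gcongr; exacts [hC y hy, hM y]
    _ = (1 + R * M) * C := by ring

end CutoffPotential

theorem stmt_4_general (n : ℕ) :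
    ∃ K : ℝ, 0 < K ∧
      ∀ C : ℝ, 0 < C →
      ∀ U : Set (EuclideanSpace ℝ (Fin n)), IsOpen U →
        Metric.closedBall (0 : EuclideanSpace ℝ (Fin n)) 1 ⊆ U →
      ∀ θ : EuclideanSpace ℝ (Fin n) → (EuclideanSpace ℝ (Fin n) →L[ℝ] ℝ),
        ContDiffOn ℝ 1 θ U →
        (∀ x ∈ U, ∀ u v : EuclideanSpace ℝ (Fin n),
          fderiv ℝ θ x u v = fderiv ℝ θ x v u) →
        (∀ y ∈ Metric.closedBall (0 : EuclideanSpace ℝ (Fin n)) 1, ‖θ y‖ ≤ C) →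
        ∃ g : EuclideanSpace ℝ (Fin n) → ℝ,
          ContDiff ℝ 2 g ∧
          tsupport g ⊆ Metric.ball (0 : EuclideanSpace ℝ (Fin n)) 1 ∧
          (∀ x : EuclideanSpace ℝ (Fin n), ‖x‖ ≤ 1 / 2 →
            θ x + fderiv ℝ g x = 0) ∧
          (∀ y ∈ Metric.closedBall (0 : EuclideanSpace ℝ (Fin n)) 1,
            ‖θ y + fderiv ℝ g y‖ ≤ K * C) := by
  let χ : ContDiffBump (0 : EuclideanSpace ℝ (Fin n)) := ⟨1 / 2, 3 / 4, by norm_num, by norm_num⟩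
  have hR : χ.rOut < 1 := by norm_num [χ]
  obtain ⟨M, hM⟩ : ∃ M, ∀ x, ‖fderiv ℝ χ x‖ ≤ M :=
    ((χ.contDiff (n := 1)).continuous_fderiv one_ne_zero).bounded_above_of_compact_support
      (χ.hasCompactSupport.fderiv (𝕜 := ℝ))
  have hM0 : 0 ≤ M := (norm_nonneg _).trans (hM 0)
  refine ⟨1 + M, by positivity, fun C _ U _ hBU θ hθ hsym hC => ?_⟩
  have hθ' : ContDiffOn ℝ 1 θ (ball 0 1) := hθ.mono (ball_subset_closedBall.trans hBU)
  have hθd : DifferentiableOn ℝ θ (ball 0 1) := hθ'.differentiableOn one_ne_zero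
  have hsym' : ∀ x ∈ ball (0 : EuclideanSpace ℝ (Fin n)) 1, ∀ u v,
      fderiv ℝ θ x u v = fderiv ℝ θ x v u := fun x hx => hsym x (hBU (ball_subset_closedBall hx))
  refine ⟨cutoffPotential χ θ, contDiff_cutoffPotential hR hθ' hsym',
    (tsupport_cutoffPotential_subset χ).trans (closedBall_subset_ball hR),
    fun x hx => add_fderiv_cutoffPotential_eq_zero hR hθd hsym' (mem_closedBall_zero_iff.2 hx),
    fun y hy =>
      (norm_add_fderiv_cutoffPotential_le hR hθd hsym' hM hC hy).trans_eq (by rw [one_mul])⟩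

/-- The analytic content of Lemma 2.5: a bounded closed 1-form `θ` on a
neighbourhood of the closed unit ball in `ℝⁿ` can be modified by adding the
differential of a `C²` function `g` supported in the open unit ball so that
the modified 1-form `θ̂ = θ + dg` vanishes on the ball of radius `1/2` and is
still bounded on the closed unit ball by `K · C`, where `K` depends only on
the dimension. -/
theorem stmt_4 (n : ℕ) (hn : 1 ≤ n) :
    ∃ K : ℝ, 0 < K ∧
      ∀ C : ℝ, 0 < C →
      ∀ U : Set (EuclideanSpace ℝ (Fin n)), IsOpen U →
        Metric.closedBall (0 : EuclideanSpace ℝ (Fin n)) 1 ⊆ U →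
      ∀ θ : EuclideanSpace ℝ (Fin n) → (EuclideanSpace ℝ (Fin n) →L[ℝ] ℝ),
        ContDiffOn ℝ 1 θ U →
        (∀ x ∈ U, ∀ u v : EuclideanSpace ℝ (Fin n),
          fderiv ℝ θ x u v = fderiv ℝ θ x v u) →
        (∀ y ∈ Metric.closedBall (0 : EuclideanSpace ℝ (Fin n)) 1, ‖θ y‖ ≤ C) →
        ∃ g : EuclideanSpace ℝ (Fin n) → ℝ,
          ContDiff ℝ 2 g ∧
          tsupport g ⊆ Metric.ball (0 : EuclideanSpace ℝ (Fin n)) 1 ∧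
          (∀ x : EuclideanSpace ℝ (Fin n), ‖x‖ ≤ 1 / 2 →
            θ x + fderiv ℝ g x = 0) ∧
          (∀ y ∈ Metric.closedBall (0 : EuclideanSpace ℝ (Fin n)) 1,
            ‖θ y + fderiv ℝ g y‖ ≤ K * C) :=
  stmt_4_general n
end
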